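/- Let X be a compact metric space and φ a uniquely ergodic flow on X whose unique invariant probability measure has full support. Then every orbit is dense, but φ need not be superdense: there is a quantitative function T ↦ c(T) with c(T)/T → ∞ possible; concretely, for the torus flow φ_t(x,y) = (x + tα, y + t) with α irrational but not badly approximable, the flow is uniquely ergodic (hence all orbits dense) yet not superdense. -/
import Mathlib


/-- The quotient metric on the torus ℝ²/ℤ², expressed on representatives. -/
noncomputable def torusDist (p q : ℝ × ℝ) : ℝ :=
  ⨅ m : ℤ × ℤ, Real.sqrt ((p.1 - q.1 - m.1) ^ 2 + (p.2 - q.2 - m.2) ^ 2)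

/-- Distance from a real number to the nearest integer. -/
noncomputable def nint (y : ℝ) : ℝ := |y - round y|

lemma nint_nonneg (x : ℝ) : 0 ≤ nint x := abs_nonneg _

lemma nint_le (x : ℝ) (k : ℤ) : nint x ≤ |x - k| := round_le x k

lemma torusDist_le (p q : ℝ × ℝ) (m : ℤ × ℤ) :
    torusDist p q ≤ Real.sqrt ((p.1 - q.1 - m.1) ^ 2 + (p.2 - q.2 - m.2) ^ 2) :=
  ciInf_le ⟨0, by rintro x ⟨m, rfl⟩; exact Real.sqrt_nonneg _⟩ m

lemma le_torusDist (p q : ℝ × ℝ) (b : ℝ)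
    (h : ∀ m : ℤ × ℤ, b ≤ Real.sqrt ((p.1 - q.1 - m.1) ^ 2 + (p.2 - q.2 - m.2) ^ 2)) :
    b ≤ torusDist p q := le_ciInf h

/-- One can reach any residue within `d` by nonnegative multiples of a positive step `d`. -/
lemma step_pos (b d : ℝ) (hd : 0 < d) : ∃ j : ℕ, ∃ k : ℤ, |b - j * d - k| ≤ d := by
  refine ⟨⌊Int.fract b / d⌋₊, ⌊b⌋, ?_⟩
  set j := ⌊Int.fract b / d⌋₊ with hj
  have h0 : (0:ℝ) ≤ Int.fract b / d := div_nonneg (Int.fract_nonneg b) hd.le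
  have h1 : (j : ℝ) ≤ Int.fract b / d := Nat.floor_le h0
  have h2 : Int.fract b / d < j + 1 := Nat.lt_floor_add_one _
  have h1' : (j : ℝ) * d ≤ Int.fract b := by
    calc (j:ℝ) * d ≤ (Int.fract b / d) * d := by nlinarith
    _ = Int.fract b := by field_simp
  have h2' : Int.fract b < (j + 1) * d := by
    have := (div_lt_iff₀ hd).mp h2
    linarith
  have hfr : Int.fract b = b - ⌊b⌋ := rfl
  rw [abs_le]
  constructor <;> nlinarith [Int.fract_nonneg b]

lemma step_any (b d : ℝ) (hd : d ≠ 0) : ∃ j : ℕ, ∃ k : ℤ, |b - j * d - k| ≤ |d| := by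
  rcases hd.lt_or_gt with h | h
  · obtain ⟨j, k, hk⟩ := step_pos (-b) (-d) (by linarith)
    refine ⟨j, -k, ?_⟩
    rw [abs_of_neg h]
    have : b - j * d - (-k : ℤ) = -(-b - j * (-d) - k) := by push_cast; ring
    rw [this, abs_neg]; exact hk
  · obtain ⟨j, k, hk⟩ := step_pos b d h
    exact ⟨j, k, by rw [abs_of_pos h]; exact hk⟩

lemma dense_step (α : ℝ) (hirr : Irrational α) (q : ℕ) (hq : 1 ≤ q) (β : ℝ) :
    ∃ j : ℕ, ∃ k : ℤ, |β - j * ((q : ℝ) * α) - k| ≤ nint ((q : ℝ) * α) := by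
  set δ := (q : ℝ) * α - round ((q : ℝ) * α) with hδdef
  have hδ : δ ≠ 0 := by
    intro h
    have heq : (q : ℝ) * α = ((round ((q : ℝ) * α) : ℤ) : ℝ) := by
      have := sub_eq_zero.mp h; linarith
    have hqirr : Irrational ((q : ℝ) * α) := hirr.natCast_mul (by omega)
    exact hqirr.ne_int _ heq
  obtain ⟨j, k, hk⟩ := step_any β δ hδ
  refine ⟨j, k - j * round ((q : ℝ) * α), ?_⟩
  have heq : β - j * ((q : ℝ) * α) - ((k - j * round ((q : ℝ) * α) : ℤ) : ℝ)
      = β - j * δ - k := by push_cast [hδdef]; ring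
  rw [heq]
  exact hk

lemma cauchy_schwarz2 (a b u v : ℝ) :
    |a * u + b * v| ≤ Real.sqrt (a ^ 2 + b ^ 2) * Real.sqrt (u ^ 2 + v ^ 2) := by
  have h : |a * u + b * v| = Real.sqrt ((a * u + b * v) ^ 2) := (Real.sqrt_sq_eq_abs _).symm
  rw [h, ← Real.sqrt_mul (by positivity)]
  exact Real.sqrt_le_sqrt (by nlinarith [sq_nonneg (a * v - b * u)])

lemma half_le_abs (k : ℤ) : (1 : ℝ) / 2 ≤ |1 / 2 - (k : ℝ)| := by
  rcases le_or_gt k 0 with h | h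
  · have : (k : ℝ) ≤ 0 := by exact_mod_cast h
    rw [abs_of_pos (by linarith)]; linarith
  · have : (1 : ℝ) ≤ k := by exact_mod_cast h
    rw [abs_of_nonpos (by linarith)]; linarith

lemma nint_half_add (w : ℝ) : 1 / 2 - |w| ≤ nint (1 / 2 + w) := by
  unfold nint
  have h1 := half_le_abs (round (1 / 2 + w))
  have h2 : |1 / 2 - (round (1/2 + w) : ℝ)| ≤ |1 / 2 + w - round (1/2 + w)| + |w| := by
    have := abs_sub_abs_le_abs_sub (1/2 + w - (round (1/2+w) : ℝ)) w
    have h3 : |(1/2 + w - (round (1/2+w):ℝ)) - w| = |1/2 - (round (1/2+w):ℝ)| := by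
      ring_nf
    calc |1 / 2 - (round (1/2 + w) : ℝ)| = |(1/2 + w - (round (1/2+w):ℝ)) - w| := by ring_nf
    _ ≤ |1/2 + w - (round (1/2+w):ℝ)| + |w| := abs_sub _ _
  linarith

/-- For `α` irrational but not badly approximable, every forward orbit of the
linear flow `φ_t(x,y) = (x + tα, y + t)` on the flat torus is dense, yet the
flow is not superdense. -/
theorem stmt_12 (α : ℝ) (hirr : Irrational α)
    (hnotbad : ∀ ε > (0 : ℝ), ∃ q : ℕ, 1 ≤ q ∧ (q : ℝ) * nint ((q : ℝ) * α) < ε) :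
    (∀ x y : ℝ, ∀ z : ℝ × ℝ, ∀ ε > (0 : ℝ),
      ∃ t : ℝ, 0 ≤ t ∧ torusDist z (x + t * α, y + t) ≤ ε) ∧
    ¬ (∃ c > (0 : ℝ), ∀ x y : ℝ, ∀ T > (0 : ℝ), ∀ z : ℝ × ℝ,
      ∃ t ∈ Set.Icc (0 : ℝ) (c * T), torusDist z (x + t * α, y + t) ≤ 1 / T) := by
  constructor
  · -- density of every forward orbit
    intro x y z ε hε
    obtain ⟨q, hq1, hq2⟩ := hnotbad ε hε
    have hq0 : (1 : ℝ) ≤ (q : ℝ) := by exact_mod_cast hq1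
    have hnq : nint ((q : ℝ) * α) < ε :=
      lt_of_le_of_lt (le_mul_of_one_le_left (nint_nonneg _) hq0) hq2
    set s := z.2 - y with hs
    set n0 := ⌈-s⌉₊ with hn0
    set β := z.1 - x - (s + n0) * α with hβ
    obtain ⟨j, k, hk⟩ := dense_step α hirr q hq1 β
    refine ⟨s + n0 + j * q, ?_, ?_⟩
    · have h1 : -s ≤ (n0 : ℝ) := Nat.le_ceil _
      have h2 : (0 : ℝ) ≤ (j : ℝ) * q := by positivity
      linarith
    · set t := s + (n0 : ℝ) + j * q with ht
      have hle := torusDist_le z (x + t * α, y + t) (k, -(n0 + j * q))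
      have h2nd : z.2 - (y + t) - ((-(n0 + j * q) : ℤ) : ℝ) = 0 := by
        push_cast [ht, hs]; ring
      have h1st : z.1 - (x + t * α) - (k : ℝ) = β - j * ((q : ℝ) * α) - k := by
        push_cast [ht, hβ]; ring
      simp only [h2nd] at hle
      rw [h1st] at hle
      have : Real.sqrt ((β - j * ((q : ℝ) * α) - k) ^ 2 + 0 ^ 2)
          = |β - j * ((q : ℝ) * α) - k| := by
        rw [show ((0:ℝ))^2 = 0 by ring, add_zero, Real.sqrt_sq_eq_abs]
      rw [this] at hle
      exact hle.trans (le_of_lt (lt_of_le_of_lt hk hnq))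
  · -- not superdense
    rintro ⟨c, hc, H⟩
    set Cα := Real.sqrt (1 + (|α| + 1) ^ 2) with hCα
    have hC1 : (1 : ℝ) ≤ Cα := by
      rw [show (1:ℝ) = Real.sqrt 1 from (Real.sqrt_one).symm]
      exact Real.sqrt_le_sqrt (by nlinarith [abs_nonneg α])
    have hCpos : 0 < Cα := by linarith
    obtain ⟨q, hq1, hq2⟩ := hnotbad (1 / (32 * c * Cα)) (by positivity)
    have hq0 : (1 : ℝ) ≤ (q : ℝ) := by exact_mod_cast hq1
    have hqpos : (0 : ℝ) < (q : ℝ) := by linarith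
    set p := round ((q : ℝ) * α) with hp
    set δ := (q : ℝ) * α - p with hδ
    have hδabs : |δ| = nint ((q : ℝ) * α) := rfl
    -- bound on |p|
    have hpabs : |(p : ℝ)| ≤ (q : ℝ) * (|α| + 1) := by
      have h1 : |(q : ℝ) * α - p| ≤ 1 / 2 := abs_sub_round _
      have h2 : |(p : ℝ)| ≤ |(q : ℝ) * α| + 1 / 2 := by
        have := abs_sub_abs_le_abs_sub ((p : ℝ)) ((q : ℝ) * α)
        have h3 : |(p : ℝ) - (q : ℝ) * α| = |(q : ℝ) * α - p| := abs_sub_comm _ _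
        linarith
      have h4 : |(q : ℝ) * α| = (q : ℝ) * |α| := by
        rw [abs_mul, abs_of_pos hqpos]
      nlinarith
    set L := Real.sqrt ((q : ℝ) ^ 2 + (p : ℝ) ^ 2) with hL
    have hLpos : 0 < L := Real.sqrt_pos.mpr (by positivity)
    have hLle : L ≤ (q : ℝ) * Cα := by
      rw [hL, hCα, show (q : ℝ) * Real.sqrt (1 + (|α| + 1) ^ 2)
          = Real.sqrt ((q : ℝ) ^ 2 * (1 + (|α| + 1) ^ 2)) by
        rw [Real.sqrt_mul (by positivity), Real.sqrt_sq hqpos.le]]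
      apply Real.sqrt_le_sqrt
      nlinarith [sq_abs (p : ℝ), abs_nonneg (p : ℝ)]
    set T := 4 * (q : ℝ) * Cα with hT
    have hTpos : 0 < T := by positivity
    obtain ⟨t, ht, hdist⟩ := H 0 0 T hTpos (1 / (2 * q), 0)
    obtain ⟨ht0, htc⟩ := ht
    -- bound on |t * δ|
    have hqδ : (q : ℝ) * |δ| < 1 / (32 * c * Cα) := by rw [hδabs]; exact hq2
    have htδ : |t * δ| < 1 / 8 := by
      have h1 : |t * δ| = t * |δ| := by rw [abs_mul, abs_of_nonneg ht0]
      have h2 : t * |δ| ≤ c * T * |δ| := by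
        apply mul_le_mul_of_nonneg_right htc (abs_nonneg _)
      have h3 : c * T * |δ| = 4 * c * Cα * ((q : ℝ) * |δ|) := by rw [hT]; ring
      have h4 : 4 * c * Cα * ((q : ℝ) * |δ|) < 4 * c * Cα * (1 / (32 * c * Cα)) := by
        apply mul_lt_mul_of_pos_left hqδ (by positivity)
      have h5 : 4 * c * Cα * (1 / (32 * c * Cα)) = 1 / 8 := by field_simp; ring
      linarith
    -- lower bound on the torus distance
    have key : (3 / 2) / T ≤ torusDist (1 / (2 * (q : ℝ)), 0) (0 + t * α, 0 + t) := by
      apply le_torusDist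
      intro m
      set u := (1 / (2 * (q : ℝ))) - (0 + t * α) - (m.1 : ℝ) with hu
      set v := (0 : ℝ) - (0 + t) - (m.2 : ℝ) with hv
      have hcs : |(q : ℝ) * u + (-(p : ℝ)) * v| ≤ L * Real.sqrt (u ^ 2 + v ^ 2) := by
        have := cauchy_schwarz2 ((q : ℝ)) (-(p : ℝ)) u v
        rw [hL]
        calc |(q : ℝ) * u + (-(p : ℝ)) * v|
            ≤ Real.sqrt ((q : ℝ) ^ 2 + (-(p : ℝ)) ^ 2) * Real.sqrt (u ^ 2 + v ^ 2) := this
          _ = Real.sqrt ((q : ℝ) ^ 2 + (p : ℝ) ^ 2) * Real.sqrt (u ^ 2 + v ^ 2) := by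
              ring_nf
      -- compute q*u - p*v
      have hqu : (q : ℝ) * u + (-(p : ℝ)) * v
          = 1 / 2 + (-(t * δ)) - ((q * m.1 - p * m.2 : ℤ) : ℝ) := by
        rw [hu, hv, hδ]
        push_cast
        field_simp
        ring
      have hnl : 1 / 2 - |t * δ| ≤ |(q : ℝ) * u + (-(p : ℝ)) * v| := by
        rw [hqu]
        have h1 : nint (1 / 2 + (-(t * δ))) ≤
            |1 / 2 + (-(t * δ)) - ((q * m.1 - p * m.2 : ℤ) : ℝ)| :=
          nint_le _ _
        have h2 := nint_half_add (-(t * δ))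
        rw [abs_neg] at h2
        linarith
      have hsqrt : (1 / 2 - |t * δ|) / L ≤ Real.sqrt (u ^ 2 + v ^ 2) := by
        rw [div_le_iff₀ hLpos]
        calc 1/2 - |t * δ| ≤ |(q : ℝ) * u + (-(p : ℝ)) * v| := hnl
          _ ≤ L * Real.sqrt (u ^ 2 + v ^ 2) := hcs
          _ = Real.sqrt (u ^ 2 + v ^ 2) * L := mul_comm _ _
      have hfinal : (3 / 2) / T ≤ (1 / 2 - |t * δ|) / L := by
        have h38 : (3 : ℝ) / 8 ≤ 1 / 2 - |t * δ| := by linarith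
        have hL4 : (3 / 2) / T = (3 / 8) / ((q : ℝ) * Cα) := by
          rw [hT]; field_simp; ring
        rw [hL4]
        calc (3/8) / ((q : ℝ) * Cα) ≤ (3/8) / L := by gcongr
          _ ≤ (1 / 2 - |t * δ|) / L := by gcongr
      exact hfinal.trans hsqrt
    have hcontra : (3 / 2) / T ≤ 1 / T := key.trans hdist
    rw [div_le_div_iff₀ hTpos hTpos] at hcontra
    nlinarith
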